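/- Let i, j ∈ {0,1}, let h be a quaternion of norm 1, let (b₀, b₁) ∈ ℂ² with b_j ≠ 0, set q = b₀ + b₁·j, let (c₀, c₁) be the complex components of q·h with c_i ≠ 0, and for θ ∈ ℝ set h_θ = (q⁻¹·(cos θ + (sin θ)·i)·q)·h with complex components (c₀^θ, c₁^θ) of q·h_θ. Then c_i^θ ≠ 0 and σ_j(b₀, b₁)·h_θ·σ_i(c₀^θ, c₁^θ)⁻¹ = σ_j(b₀, b₁)·h·σ_i(c₀, c₁)⁻¹·(cos θ + (sin θ)·i); that is, the trivialising map 𝔗_{i,j} is equivariant for the circle action. -/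

import Mathlib

/-!
Since `q h_θ = z (q h)` with `z = cos θ + i sin θ`, the complex components of `q h_θ` are those
of `q h` scaled by `z`, which leaves `σ_i` unchanged. Moreover `σ_i(c₀, c₁)` is a complex
multiple `v (q h)` of `q h = c₀ + c₁ j`, so in `h_θ σ_i⁻¹ = q⁻¹ z (q h) (q h)⁻¹ v⁻¹` the factor
`q h` cancels and `z`, commuting with `v`, can be moved to the far right.
-/

open Quaternion

noncomputable section

/-- The embedding of `ℂ` into the quaternions `ℍ` as the real span of `1` and `i`. -/
def cq (z : ℂ) : ℍ[ℝ] := ⟨z.re, z.im, 0, 0⟩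

/-- The imaginary unit `j` of the quaternions. -/
def jq : ℍ[ℝ] := ⟨0, 0, 1, 0⟩

/-- `σ₀(a₀,a₁) = (1 + (a₁/a₀)·j)/‖1 + (a₁/a₀)·j‖`, defined for `a₀ ≠ 0`. -/
def sigma0 (a₀ a₁ : ℂ) : ℍ[ℝ] := ‖cq 1 + cq (a₁ / a₀) * jq‖⁻¹ • (cq 1 + cq (a₁ / a₀) * jq)

/-- `σ₁(a₀,a₁) = (a₀/a₁ + j)/‖a₀/a₁ + j‖`, defined for `a₁ ≠ 0`. -/
def sigma1 (a₀ a₁ : ℂ) : ℍ[ℝ] := ‖cq (a₀ / a₁) + jq‖⁻¹ • (cq (a₀ / a₁) + jq)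

/-- The complex components of a quaternion: `q = c₀ + c₁·j` with
`c₀ = re q + (im_i q)·i` and `c₁ = im_j q + (im_k q)·i`. -/
def comps (q : ℍ[ℝ]) : ℂ × ℂ := (⟨q.re, q.imI⟩, ⟨q.imJ, q.imK⟩)

/-- The complex projective line `ℂP¹`, as the projectivization of `ℂ²`. -/
abbrev CP1 := Projectivization ℂ (ℂ × ℂ)

/-- The quotient topology on `ℂP¹`. -/
instance : TopologicalSpace CP1 := instTopologicalSpaceQuotient

/-- `σ_j` for `j ∈ {0,1}`. -/
def sigma' (j : Fin 2) (a₀ a₁ : ℂ) : ℍ[ℝ] := if j = 0 then sigma0 a₀ a₁ else sigma1 a₀ a₁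

@[simp] lemma cq_re (z : ℂ) : (cq z).re = z.re := rfl
@[simp] lemma cq_imI (z : ℂ) : (cq z).imI = z.im := rfl
@[simp] lemma cq_imJ (z : ℂ) : (cq z).imJ = 0 := rfl
@[simp] lemma cq_imK (z : ℂ) : (cq z).imK = 0 := rfl
@[simp] lemma jq_re : jq.re = 0 := rfl
@[simp] lemma jq_imI : jq.imI = 0 := rfl
@[simp] lemma jq_imJ : jq.imJ = 1 := rfl
@[simp] lemma jq_imK : jq.imK = 0 := rfl

lemma cq_mul (z w : ℂ) : cq (z * w) = cq z * cq w := by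
  ext <;> simp [Complex.mul_re, Complex.mul_im]

lemma cq_one : cq 1 = 1 := by
  ext <;> simp

lemma cq_ofReal_mul (r : ℝ) (x : ℍ[ℝ]) : cq r * x = r • x := by
  ext <;> simp

lemma commute_cq (z w : ℂ) : Commute (cq z) (cq w) := by
  rw [Commute, SemiconjBy, ← cq_mul, ← cq_mul, mul_comm]

lemma cq_add_cq_mul_jq_comps (x : ℍ[ℝ]) : cq (comps x).1 + cq (comps x).2 * jq = x := by
  ext <;> simp [comps]

lemma comps_cq_mul (z : ℂ) (x : ℍ[ℝ]) :
    comps (cq z * x) = (z * (comps x).1, z * (comps x).2) := by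
  refine Prod.ext (Complex.ext ?_ ?_) (Complex.ext ?_ ?_) <;>
    simp [comps, Complex.mul_re, Complex.mul_im]

lemma comps_zero : comps 0 = (0, 0) := rfl

lemma sigma0_eq_cq_mul {c₀ : ℂ} (c₁ : ℂ) (hc₀ : c₀ ≠ 0) :
    ∃ v : ℂ, sigma0 c₀ c₁ = cq v * (cq c₀ + cq c₁ * jq) := by
  have hdiv : cq 1 + cq (c₁ / c₀) * jq = cq c₀⁻¹ * (cq c₀ + cq c₁ * jq) := by
    rw [mul_add, ← mul_assoc, ← cq_mul, ← cq_mul, inv_mul_cancel₀ hc₀, inv_mul_eq_div]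
  refine ⟨(‖cq 1 + cq (c₁ / c₀) * jq‖⁻¹ : ℝ) * c₀⁻¹, ?_⟩
  rw [sigma0, cq_mul, mul_assoc, ← hdiv, cq_ofReal_mul]

lemma sigma1_eq_cq_mul (c₀ : ℂ) {c₁ : ℂ} (hc₁ : c₁ ≠ 0) :
    ∃ v : ℂ, sigma1 c₀ c₁ = cq v * (cq c₀ + cq c₁ * jq) := by
  have hdiv : cq (c₀ / c₁) + jq = cq c₁⁻¹ * (cq c₀ + cq c₁ * jq) := by
    rw [mul_add, ← mul_assoc, ← cq_mul, ← cq_mul, inv_mul_cancel₀ hc₁, cq_one, one_mul,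
      inv_mul_eq_div]
  refine ⟨(‖cq (c₀ / c₁) + jq‖⁻¹ : ℝ) * c₁⁻¹, ?_⟩
  rw [sigma1, cq_mul, mul_assoc, ← hdiv, cq_ofReal_mul]

lemma sigma'_eq_cq_mul (i : Fin 2) {c₀ c₁ : ℂ} (hc : (if i = 0 then c₀ else c₁) ≠ 0) :
    ∃ v : ℂ, sigma' i c₀ c₁ = cq v * (cq c₀ + cq c₁ * jq) := by
  unfold sigma'
  split_ifs at hc ⊢
  · exact sigma0_eq_cq_mul c₁ hc
  · exact sigma1_eq_cq_mul c₀ hc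

lemma sigma'_mul_mul (i : Fin 2) {z : ℂ} (hz : z ≠ 0) (c₀ c₁ : ℂ) :
    sigma' i (z * c₀) (z * c₁) = sigma' i c₀ c₁ := by
  simp only [sigma', sigma0, sigma1, mul_div_mul_left _ _ hz]

lemma mk_cos_sin_eq_exp (θ : ℝ) : (⟨Real.cos θ, Real.sin θ⟩ : ℂ) = Complex.exp (θ * Complex.I) :=
  Complex.ext (by simp [Complex.exp_ofReal_mul_I_re]) (by simp [Complex.exp_ofReal_mul_I_im])

lemma mul_inv_mul_mul_mul {G₀ : Type*} [GroupWithZero G₀] (q a x : G₀) :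
    q * (q⁻¹ * a * q * x) = a * (q * x) := by
  rcases eq_or_ne q 0 with rfl | hq
  · simp
  · simp only [mul_assoc, mul_inv_cancel_left₀ hq]

lemma inv_mul_mul_mul_mul_inv_of_commute {D : Type*} [DivisionRing D] {q h a u : D}
    (hqh : q * h ≠ 0) (hau : Commute a u) :
    q⁻¹ * a * q * h * (u * (q * h))⁻¹ = h * (u * (q * h))⁻¹ * a := by
  have hh : h ≠ 0 := right_ne_zero_of_mul hqh
  calc q⁻¹ * a * q * h * (u * (q * h))⁻¹ = q⁻¹ * a * ((q * h) * (q * h)⁻¹) * u⁻¹ := by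
        simp only [mul_inv_rev, mul_assoc]
    _ = q⁻¹ * (u⁻¹ * a) := by rw [mul_inv_cancel₀ hqh, mul_one, mul_assoc, hau.inv_right₀.eq]
    _ = h * (u * (q * h))⁻¹ * a := by
        simp only [mul_inv_rev, mul_assoc, mul_inv_cancel_left₀ hh]

theorem trivialising_map_equivariant_general (i j : Fin 2) (h : ℍ[ℝ]) (b₀ b₁ : ℂ) (θ : ℝ) (q : ℍ[ℝ])
    (hθ : ℍ[ℝ]) (hhθ : hθ = (q⁻¹ * cq ⟨Real.cos θ, Real.sin θ⟩ * q) * h)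
    (hc : (if i = 0 then (comps (q * h)).1 else (comps (q * h)).2) ≠ 0) :
    (if i = 0 then (comps (q * hθ)).1 else (comps (q * hθ)).2) ≠ 0 ∧
    sigma' j b₀ b₁ * hθ * (sigma' i (comps (q * hθ)).1 (comps (q * hθ)).2)⁻¹ =
      sigma' j b₀ b₁ * h * (sigma' i (comps (q * h)).1 (comps (q * h)).2)⁻¹ *
        cq ⟨Real.cos θ, Real.sin θ⟩ := by
  have hz : (⟨Real.cos θ, Real.sin θ⟩ : ℂ) ≠ 0 := mk_cos_sin_eq_exp θ ▸ Complex.exp_ne_zero _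
  set z : ℂ := ⟨Real.cos θ, Real.sin θ⟩
  have hqh : q * h ≠ 0 := by
    rintro h0
    simp [h0, comps_zero] at hc
  have hcomps : comps (q * hθ) = (z * (comps (q * h)).1, z * (comps (q * h)).2) := by
    rw [hhθ, mul_inv_mul_mul_mul, comps_cq_mul]
  obtain ⟨v, hv⟩ := sigma'_eq_cq_mul i hc
  rw [cq_add_cq_mul_jq_comps] at hv
  refine ⟨?_, ?_⟩
  · rw [hcomps, ← mul_ite]
    exact mul_ne_zero hz hc
  · rw [hcomps, sigma'_mul_mul i hz, hv, hhθ, mul_assoc _ (q⁻¹ * _ * q * h),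
      inv_mul_mul_mul_mul_inv_of_commute hqh (commute_cq z v)]
    simp only [mul_assoc]

/-- Equivariance of the trivialising map `𝔗_{i,j}` under the circle action: with
`q = b₀ + b₁·j`, `h_θ = (q⁻¹·(cos θ + sin θ·i)·q)·h`, and `(c₀^θ, c₁^θ)` the complex
components of `q·h_θ`, one has `c_i^θ ≠ 0` and
`σ_j(b₀,b₁)·h_θ·σ_i(c₀^θ,c₁^θ)⁻¹ = σ_j(b₀,b₁)·h·σ_i(c₀,c₁)⁻¹·(cos θ + sin θ·i)`. -/
theorem trivialising_map_equivariant (i j : Fin 2) (h : ℍ[ℝ]) (hh : ‖h‖ = 1)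
    (b₀ b₁ : ℂ) (hb : (if j = 0 then b₀ else b₁) ≠ 0) (θ : ℝ)
    (q : ℍ[ℝ]) (hq : q = cq b₀ + cq b₁ * jq)
    (hθ : ℍ[ℝ]) (hhθ : hθ = (q⁻¹ * cq ⟨Real.cos θ, Real.sin θ⟩ * q) * h)
    (hc : (if i = 0 then (comps (q * h)).1 else (comps (q * h)).2) ≠ 0) :
    (if i = 0 then (comps (q * hθ)).1 else (comps (q * hθ)).2) ≠ 0 ∧
    sigma' j b₀ b₁ * hθ * (sigma' i (comps (q * hθ)).1 (comps (q * hθ)).2)⁻¹ =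
      sigma' j b₀ b₁ * h * (sigma' i (comps (q * h)).1 (comps (q * h)).2)⁻¹ *
        cq ⟨Real.cos θ, Real.sin θ⟩ :=
  trivialising_map_equivariant_general i j h b₀ b₁ θ q hθ hhθ hc
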